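/- Let A = A_n(⪯,R) be an incidence ring over a ring R with Jacobson radical J = J(R), and let φ : A → A_n(⪯, R/J) be the entrywise reduction map. Then a nonempty subset S ⊆ A together with the scalar matrices R·I_n generates A as a ring if and only if φ(S) together with the scalar matrices over R/J generates A_n(⪯, R/J) as a ring. -/

import Mathlib

/-- The set of matrices of the incidence ring `A_n(⪯, R)`:
matrices with `A i j = 0` whenever `¬ i ⪯ j`. -/
def IncSet (n : ℕ) (r : Fin n → Fin n → Prop) (R : Type*) [Ring R] :
    Set (Matrix (Fin n) (Fin n) R) :=
  {A | ∀ i j, ¬ r i j → A i j = 0}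

/-- The covering relation `i ⋖ j` of `⪯` : `i ≺ j` and no `k` with `i ≺ k ≺ j`. -/
def Covers {n : ℕ} (r : Fin n → Fin n → Prop) (i j : Fin n) : Prop :=
  r i j ∧ i ≠ j ∧ ∀ k, ¬ ((r i k ∧ i ≠ k) ∧ (r k j ∧ k ≠ j))

/-- `Gen_m(A,R)` : the set of `m`-tuples of elements of the incidence ring which
together with all scalar matrices `R·Iₙ` generate the incidence ring. -/
def GenSet (n m : ℕ) (r : Fin n → Fin n → Prop) (R : Type*) [Ring R] :
    Set (Fin m → Matrix (Fin n) (Fin n) R) :=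
  {A | (∀ α, A α ∈ IncSet n r R) ∧
    (Subring.closure (Set.range A ∪ Set.range (fun c : R => Matrix.scalar (Fin n) c)) :
        Set (Matrix (Fin n) (Fin n) R)) = IncSet n r R}

/-- The incidence ring `A_n(⪯, R)` as a subring of the full matrix ring. -/
def IncSubring (n : ℕ) (r : Fin n → Fin n → Prop) (hrefl : ∀ i, r i i)
    (htrans : ∀ i j k, r i j → r j k → r i k) (R : Type*) [Ring R] :
    Subring (Matrix (Fin n) (Fin n) R) where
  carrier := IncSet n r R
  zero_mem' := by intro i j _; rfl
  one_mem' := by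
    intro i j h
    have hne : i ≠ j := by rintro rfl; exact h (hrefl i)
    simp [Matrix.one_apply_ne hne]
  add_mem' := by
    intro A B hA hB i j h
    simp [Matrix.add_apply, hA i j h, hB i j h]
  neg_mem' := by
    intro A hA i j h
    simp [Matrix.neg_apply, hA i j h]
  mul_mem' := by
    intro A B hA hB i j h
    simp only [Matrix.mul_apply]
    refine Finset.sum_eq_zero fun k _ => ?_
    by_cases hik : r i k
    · by_cases hkj : r k j
      · exact absurd (htrans i k j hik hkj) h
      · rw [hB k j hkj, mul_zero]
    · rw [hA i k hik, zero_mul]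

section Aux

variable {n : ℕ} {r : Fin n → Fin n → Prop} {R : Type*} [Ring R]

/-- The incidence set as an (left) `R`-submodule of the matrix ring. -/
def IncSubmodule (n : ℕ) (r : Fin n → Fin n → Prop) (R : Type*) [Ring R] :
    Submodule R (Matrix (Fin n) (Fin n) R) where
  carrier := IncSet n r R
  zero_mem' := by intro i j _; rfl
  add_mem' := by intro A B hA hB i j h; simp [Matrix.add_apply, hA i j h, hB i j h]
  smul_mem' := by intro c A hA i j h; simp [Matrix.smul_apply, hA i j h]

lemma incSubmodule_eq_span :
    IncSubmodule n r R = Submodule.span R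
      ((fun p : Fin n × Fin n => Matrix.single p.1 p.2 (1 : R)) ''
        {p | r p.1 p.2}) := by
  classical
  apply le_antisymm
  · intro X hX
    rw [Matrix.matrix_eq_sum_single X]
    refine Submodule.sum_mem _ fun i _ => Submodule.sum_mem _ fun j _ => ?_
    by_cases hij : r i j
    · have : Matrix.single i j (X i j)
          = X i j • Matrix.single i j (1 : R) := by
        rw [Matrix.smul_single, smul_eq_mul, mul_one]
      rw [this]
      exact Submodule.smul_mem _ _ (Submodule.subset_span ⟨(i, j), hij, rfl⟩)
    · rw [hX i j hij, Matrix.single_zero]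
      exact Submodule.zero_mem _
  · rw [Submodule.span_le]
    rintro _ ⟨⟨i, j⟩, hij, rfl⟩ a b hab
    exact Matrix.single_apply_of_ne (i := i) (j := j) (i' := a) (j' := b) (c := (1 : R)) (by rintro ⟨rfl, rfl⟩; exact hab hij)

lemma incSubmodule_fg : (IncSubmodule n r R).FG := by
  rw [incSubmodule_eq_span]
  exact Submodule.fg_span ((Set.toFinite _).image _)

lemma mem_smul_incSubmodule {J : Ideal R} {Z : Matrix (Fin n) (Fin n) R}
    (hZ : Z ∈ IncSet n r R) (hJ : ∀ i j, Z i j ∈ J) :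
    Z ∈ J • IncSubmodule n r R := by
  classical
  rw [Matrix.matrix_eq_sum_single Z]
  refine Submodule.sum_mem _ fun i _ => Submodule.sum_mem _ fun j _ => ?_
  by_cases hij : r i j
  · have : Matrix.single i j (Z i j)
        = Z i j • Matrix.single i j (1 : R) := by
      rw [Matrix.smul_single, smul_eq_mul, mul_one]
    rw [this]
    refine Submodule.smul_mem_smul (hJ i j) ?_
    intro a b hab
    exact Matrix.single_apply_of_ne (i := i) (j := j) (i' := a) (j' := b) (c := (1 : R)) (by rintro ⟨rfl, rfl⟩; exact hab hij)
  · rw [hZ i j hij, Matrix.single_zero]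
    exact Submodule.zero_mem _

lemma scalar_mem_incSet (hrefl : ∀ i, r i i) (c : R) :
    Matrix.scalar (Fin n) c ∈ IncSet n r R := by
  intro i j h
  have hne : i ≠ j := by rintro rfl; exact h (hrefl i)
  simp [Matrix.scalar_apply, Matrix.diagonal_apply_ne _ hne]

end Aux


open Submodule in
lemma nakayama_nc_span {R M : Type*} [Ring R] [AddCommGroup M] [Module R M]
    {J : Ideal R} (hmul : ∀ x y : R, x ∈ J → x * y ∈ J) (hJ : J ≤ Ideal.jacobson ⊥)
    (s : Finset M) (h : span R (s : Set M) ≤ J • span R (s : Set M)) :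
    span R (s : Set M) = ⊥ := by
  classical
  induction s using Finset.strongInduction with
  | _ s ih =>
    rcases s.eq_empty_or_nonempty with rfl | ⟨m, hm⟩
    · simp
    · -- key: J • span s ≤ ⨆ x ∈ s, J.map (toSpanSingleton x)
      have key : J • span R (s : Set M) ≤
          ⨆ x ∈ s, Submodule.map (LinearMap.toSpanSingleton R M x) J := by
        refine smul_le.2 fun a ha y hy => ?_
        obtain ⟨f, -, rfl⟩ := mem_span_finset.1 hy
        rw [Finset.smul_sum]
        refine sum_mem fun x hx => ?_
        rw [smul_smul]
        exact le_iSup₂ (f := fun x _ => Submodule.map (LinearMap.toSpanSingleton R M x) J) x hx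
          (mem_map_of_mem (hmul a (f x) ha))
      have hmem : m ∈ ⨆ x ∈ s, Submodule.map (LinearMap.toSpanSingleton R M x) J :=
        key (h (subset_span hm))
      rw [mem_iSup_finset_iff_exists_sum] at hmem
      obtain ⟨μ, hμ⟩ := hmem
      -- extract coefficients
      have hc : ∀ x : M, ∃ c : R, c ∈ J ∧ c • x = (μ x : M) := by
        intro x
        obtain ⟨c, hcJ, hcx⟩ := mem_map.1 (μ x).2
        exact ⟨c, hcJ, hcx⟩
      choose c hcJ hcx using hc
      have hsum : m = ∑ x ∈ s, c x • x := by
        rw [← hμ]; exact (Finset.sum_congr rfl fun x _ => (hcx x)).symm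
      -- (1 - c m) • m ∈ span (s.erase m)
      have herase : (1 - c m) • m ∈ span R ((s.erase m : Finset M) : Set M) := by
        have : (1 - c m) • m = ∑ x ∈ s.erase m, c x • x := by
          rw [sub_smul, one_smul]
          rw [Finset.sum_erase_eq_sub hm, ← hsum]
        rw [this]
        exact sum_mem fun x hx => smul_mem _ _ (subset_span hx)
      obtain ⟨u, hu⟩ := Ideal.exists_mul_sub_mem_of_sub_one_mem_jacobson (1 - c m)
        (by simpa using J.neg_mem (hcJ m) |> hJ)
      rw [Ideal.mem_bot, sub_eq_zero] at hu
      have hmspan : m ∈ span R ((s.erase m : Finset M) : Set M) := by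
        have := smul_mem (span R ((s.erase m : Finset M) : Set M)) u herase
        rwa [smul_smul, hu, one_smul] at this
      have hspan_eq : span R (s : Set M) = span R ((s.erase m : Finset M) : Set M) := by
        refine le_antisymm (span_le.2 fun x hx => ?_) (span_mono (by simp [Finset.erase_subset]))
        by_cases hxm : x = m
        · subst hxm; exact hmspan
        · exact subset_span (Finset.mem_erase.2 ⟨hxm, hx⟩)
      rw [hspan_eq] at h ⊢
      exact ih (s.erase m) (Finset.erase_ssubset hm) h

open Submodule in
lemma nakayama_nc_rel {R M : Type*} [Ring R] [AddCommGroup M] [Module R M]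
    {J : Ideal R} (hmul : ∀ x y : R, x ∈ J → x * y ∈ J) (hJ : J ≤ Ideal.jacobson ⊥)
    {N N' : Submodule R M} (hfg : N'.FG) (h : N' ≤ N ⊔ J • N') : N' ≤ N := by
  have hmap : N'.map N.mkQ ≤ J • N'.map N.mkQ := by
    have := map_mono (f := N.mkQ) h
    rwa [Submodule.map_sup, map_smul'', (by rw [map_le_iff_le_comap, comap_bot, ker_mkQ] :
      N.map N.mkQ ≤ ⊥).antisymm bot_le, bot_sup_eq] at this
  obtain ⟨s, hs⟩ := hfg.map N.mkQ
  rw [← hs] at hmap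
  have hbot : N'.map N.mkQ = ⊥ := by rw [← hs]; exact nakayama_nc_span hmul hJ s hmap
  have h2 := map_le_iff_le_comap.1 (le_of_eq hbot)
  rwa [comap_bot, ker_mkQ] at h2


/-- let `π : R → R'` be the reduction of R modulo its Jacobson
radical (a surjective ring hom with kernel `J(R)`), and `φ = Matrix.map · π`
the entrywise reduction `A_n(⪯,R) → A_n(⪯,R/J)`. Then a nonempty
`S ⊆ A_n(⪯,R)` together with the scalar matrices generates `A_n(⪯,R)` iff
`φ(S)` together with the scalar matrices over `R/J` generates `A_n(⪯,R/J)`. -/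
theorem stmt6 (n : ℕ) (r : Fin n → Fin n → Prop)
    (hrefl : ∀ i, r i i) (hanti : ∀ i j, r i j → r j i → i = j)
    (htrans : ∀ i j k, r i j → r j k → r i k)
    (R R' : Type*) [Ring R] [Ring R'] (π : R →+* R')
    (hsurj : Function.Surjective π)
    (hker : RingHom.ker π = Ideal.jacobson (⊥ : Ideal R))
    (S : Set (Matrix (Fin n) (Fin n) R)) (hS : S ⊆ IncSet n r R)
    (hSne : S.Nonempty) :
    (Subring.closure (S ∪ Set.range fun c : R => Matrix.scalar (Fin n) c) :
        Set (Matrix (Fin n) (Fin n) R)) = IncSet n r R ↔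
      (Subring.closure ((fun A : Matrix (Fin n) (Fin n) R => A.map π) '' S ∪
            Set.range fun c : R' => Matrix.scalar (Fin n) c) :
          Set (Matrix (Fin n) (Fin n) R')) = IncSet n r R' := by
  classical
  set f : Matrix (Fin n) (Fin n) R →+* Matrix (Fin n) (Fin n) R' := π.mapMatrix with hfdef
  have hfapp : ∀ A : Matrix (Fin n) (Fin n) R, f A = A.map π := fun _ => rfl
  -- image of scalars
  have hscal : f '' (Set.range fun c : R => Matrix.scalar (Fin n) c)
      = Set.range fun c : R' => Matrix.scalar (Fin n) c := by
    ext B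
    constructor
    · rintro ⟨_, ⟨c, rfl⟩, rfl⟩
      refine ⟨π c, ?_⟩
      rw [hfapp]
      simp [Matrix.scalar_apply, Matrix.diagonal_map (map_zero π)]
    · rintro ⟨c', rfl⟩
      obtain ⟨c, rfl⟩ := hsurj c'
      refine ⟨Matrix.scalar (Fin n) c, ⟨c, rfl⟩, ?_⟩
      rw [hfapp]
      simp [Matrix.scalar_apply, Matrix.diagonal_map (map_zero π)]
  -- closure of images = image of closure (as sets)
  have hclos : (Subring.closure ((fun A : Matrix (Fin n) (Fin n) R => A.map π) '' S ∪
        Set.range fun c : R' => Matrix.scalar (Fin n) c) :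
        Set (Matrix (Fin n) (Fin n) R'))
      = f '' (Subring.closure (S ∪ Set.range fun c : R => Matrix.scalar (Fin n) c) :
          Set (Matrix (Fin n) (Fin n) R)) := by
    have : (fun A : Matrix (Fin n) (Fin n) R => A.map π) '' S = f '' S := rfl
    rw [this, ← hscal, ← Set.image_union, ← RingHom.map_closure]
    rfl
  -- image of the incidence set
  have himg : f '' IncSet n r R = IncSet n r R' := by
    ext B
    constructor
    · rintro ⟨A, hA, rfl⟩ i j h
      rw [hfapp]
      simp [Matrix.map_apply, hA i j h]
    · intro hB
      refine ⟨fun i j => if h : r i j then (hsurj (B i j)).choose else 0, fun i j h => by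
        simp [h], ?_⟩
      show Matrix.map (Matrix.of fun i j => if h : r i j then (hsurj (B i j)).choose else 0) π = B
      ext i j
      simp only [Matrix.map_apply]
      by_cases h : r i j
      · simp [h, (hsurj (B i j)).choose_spec]
      · simp [h, hB i j h]
  constructor
  · intro h
    rw [hclos, h, himg]
  · intro h
    -- N : the closure as a submodule
    set cl := Subring.closure (S ∪ Set.range fun c : R => Matrix.scalar (Fin n) c) with hcl
    have hsmul_mem : ∀ (c : R) {X : Matrix (Fin n) (Fin n) R}, X ∈ cl → c • X ∈ cl := by
      intro c X hX
      have hscalmem : Matrix.scalar (Fin n) c ∈ cl :=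
        Subring.subset_closure (Set.mem_union_right _ ⟨c, rfl⟩)
      have : c • X = Matrix.scalar (Fin n) c * X := by
        rw [Matrix.scalar_apply, ← Matrix.smul_eq_diagonal_mul]
      rw [this]
      exact mul_mem hscalmem hX
    set N : Submodule R (Matrix (Fin n) (Fin n) R) :=
      { carrier := (cl : Set (Matrix (Fin n) (Fin n) R))
        zero_mem' := zero_mem cl
        add_mem' := fun ha hb => add_mem ha hb
        smul_mem' := fun c _ hX => hsmul_mem c hX } with hN
    -- closure ⊆ IncSet
    have hsub : (cl : Set (Matrix (Fin n) (Fin n) R)) ⊆ IncSet n r R := by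
      have : cl ≤ IncSubring n r hrefl htrans R := by
        rw [Subring.closure_le]
        rintro X (hX | ⟨c, rfl⟩)
        · exact hS hX
        · exact scalar_mem_incSet hrefl c
      exact this
    -- kernel ideal facts
    set J : Ideal R := RingHom.ker π with hJdef
    have hmul : ∀ x y : R, x ∈ J → x * y ∈ J := by
      intro x y hx
      rw [RingHom.mem_ker] at hx ⊢
      rw [map_mul, hx, zero_mul]
    have hJjac : J ≤ Ideal.jacobson (⊥ : Ideal R) := le_of_eq hker
    -- main inclusion M ≤ N ⊔ J • M
    have hmain : IncSubmodule n r R ≤ N ⊔ J • IncSubmodule n r R := by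
      intro X hX
      have hfX : f X ∈ (IncSet n r R' : Set (Matrix (Fin n) (Fin n) R')) := by
        rw [← himg]; exact ⟨X, hX, rfl⟩
      rw [← h, hclos] at hfX
      obtain ⟨Y, hY, hYX⟩ := hfX
      have hYN : Y ∈ N := hY
      have hZ : X - Y ∈ J • IncSubmodule n r R := by
        refine mem_smul_incSubmodule ?_ ?_
        · intro i j hij
          have hXij : X i j = 0 := hX i j hij
          have hYij : Y i j = 0 := hsub hY i j hij
          simp [Matrix.sub_apply, hXij, hYij]
        · intro i j
          rw [hJdef, RingHom.mem_ker]
          have : (f Y) i j = (f X) i j := by rw [hYX]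
          rw [hfapp, hfapp] at this
          simp only [Matrix.map_apply] at this
          simp [Matrix.sub_apply, map_sub, this]
      have : X = Y + (X - Y) := by abel
      rw [this]
      exact Submodule.add_mem_sup hYN hZ
    have hle : IncSubmodule n r R ≤ N :=
      nakayama_nc_rel hmul hJjac incSubmodule_fg hmain
    exact le_antisymm hsub hle
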